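/- Let P and Q be probability measures on the same measurable space. If D_KL(P‖Q) < ∞, then lim_{α → 0⁺} JS_α(P‖Q) / (α(1−α)) = D_KL(P‖Q); and if D_KL(Q‖P) < ∞, then lim_{α → 1⁻} JS_α(P‖Q) / (α(1−α)) = D_KL(Q‖P). -/

import Mathlib

open MeasureTheory ProbabilityTheory Topology Filter
open scoped ENNReal

noncomputable section

open Classical in
/-- Kullback–Leibler divergence with values in `ℝ≥0∞`: it equals `∫ log (dP/dQ) dP` when
`P ≪ Q` and the log-density is `P`-integrable, and `∞` otherwise. -/
def klDiv {β : Type*} [MeasurableSpace β] (P Q : Measure β) : ℝ≥0∞ :=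
  if P ≪ Q ∧ Integrable (fun x => Real.log (P.rnDeriv Q x).toReal) P then
    ENNReal.ofReal (∫ x, Real.log (P.rnDeriv Q x).toReal ∂P)
  else ⊤

/-- α-Jensen–Shannon divergence:
`JS_α(P‖Q) = α D_KL(P ‖ αP + (1-α)Q) + (1-α) D_KL(Q ‖ αP + (1-α)Q)`.
(The two KL divergences against the mixture are finite for `α ∈ (0,1)`.) -/
def jsDiv {β : Type*} [MeasurableSpace β] (a : ℝ) (P Q : Measure β) : ℝ :=
  a * (klDiv P (ENNReal.ofReal a • P + ENNReal.ofReal (1 - a) • Q)).toReal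
    + (1 - a) * (klDiv Q (ENNReal.ofReal a • P + ENNReal.ofReal (1 - a) • Q)).toReal

section JSAux


lemma phi_ge {u : ℝ} (hu : 0 < u) : u - 1 ≤ u * Real.log u := by
  have h := Real.log_le_sub_one_of_pos (inv_pos.2 hu)
  rw [Real.log_inv] at h
  have h2 : u * (-Real.log u) ≤ u * (u⁻¹ - 1) := mul_le_mul_of_nonneg_left h hu.le
  rw [mul_sub, mul_inv_cancel₀ hu.ne'] at h2
  nlinarith

lemma abs_log_affine_le' {a t : ℝ} (ha : 0 < a) (ha1 : a < 1) (ht : 0 ≤ t) :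
    |Real.log (a * t + (1 - a))| ≤ |Real.log (1 - a)| + (a * t + 1) := by
  have h1a : (0:ℝ) < 1 - a := by linarith
  have hu : (0:ℝ) < a * t + (1 - a) := by nlinarith
  have hup : Real.log (a * t + (1 - a)) ≤ a * t + 1 := by
    have := Real.log_le_sub_one_of_pos hu; linarith
  have hlow : Real.log (1 - a) ≤ Real.log (a * t + (1 - a)) :=
    Real.log_le_log h1a (by nlinarith)
  rw [abs_le]
  constructor
  · have h3 : -|Real.log (1 - a)| ≤ Real.log (1 - a) := neg_abs_le _
    nlinarith
  · have h3 : (0:ℝ) ≤ |Real.log (1 - a)| := abs_nonneg _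
    linarith

lemma abs_log_affine_le {a t : ℝ} (ha : 0 < a) (ha1 : a < 1) (ht : 0 ≤ t) :
    |Real.log (a * t + (1 - a))| ≤ (|Real.log (1 - a)| + Real.log 2) + |Real.log t| := by
  have h1a : (0:ℝ) < 1 - a := by linarith
  have hu : (0:ℝ) < a * t + (1 - a) := by nlinarith
  have hlog2 : (0:ℝ) ≤ Real.log 2 := Real.log_nonneg one_le_two
  rcases le_or_gt (a * t + (1 - a)) 1 with h | h
  · have habs : |Real.log (a*t+(1-a))| = -Real.log (a*t+(1-a)) :=
      abs_of_nonpos (Real.log_nonpos hu.le h)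
    have h2 : Real.log (1-a) ≤ Real.log (a*t+(1-a)) := Real.log_le_log h1a (by nlinarith)
    have h3 : |Real.log (1-a)| = -Real.log (1-a) :=
      abs_of_nonpos (Real.log_nonpos h1a.le (by linarith))
    rw [habs, h3]
    have := abs_nonneg (Real.log t); linarith
  · have habs : |Real.log (a*t+(1-a))| = Real.log (a*t+(1-a)) := abs_of_pos (Real.log_pos h)
    have hmax : (0:ℝ) < max t 1 := lt_max_of_lt_right one_pos
    have hle : a*t+(1-a) ≤ 2 * max t 1 := by
      have h1 : a * t ≤ max t 1 := le_trans (by nlinarith) (le_max_left _ _)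
      have h2 : 1 - a ≤ max t 1 := le_trans (by linarith) (le_max_right _ _)
      linarith
    have h4 : Real.log (a*t+(1-a)) ≤ Real.log 2 + Real.log (max t 1) := by
      calc Real.log (a*t+(1-a)) ≤ Real.log (2 * max t 1) := Real.log_le_log hu hle
      _ = Real.log 2 + Real.log (max t 1) := Real.log_mul two_ne_zero hmax.ne'
    have hmt : Real.log (max t 1) ≤ |Real.log t| := by
      rcases le_total t 1 with h' | h'
      · rw [max_eq_right h']; simpa using abs_nonneg (Real.log t)
      · rw [max_eq_left h']; exact le_abs_self _
    have := abs_nonneg (Real.log (1-a))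
    rw [habs]; linarith

lemma psi_bounds {a t : ℝ} (ha : 0 < a) (ha1 : a < 1) (ht : 0 ≤ t) :
    |t * Real.log t - ((a * t + (1 - a)) * Real.log (a * t + (1 - a))) / a|
      ≤ t * Real.log t - (t - 1) := by
  have h1a : (0:ℝ) < 1 - a := by linarith
  have hu : (0:ℝ) < a * t + (1 - a) := by nlinarith
  have hconv := Real.convexOn_mul_log.2 (Set.mem_Ici.mpr ht)
    (Set.mem_Ici.mpr (zero_le_one)) ha.le h1a.le (by ring)
  simp only [smul_eq_mul, mul_one, Real.log_one, mul_zero, add_zero] at hconv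


  have hlow := phi_ge hu
  have hGt : t - 1 ≤ t * Real.log t := by
    rcases eq_or_lt_of_le ht with h | h
    · rw [← h]; norm_num
    · exact phi_ge h
  rw [abs_le]
  constructor
  · have hdiv : (a*t+(1-a)) * Real.log (a*t+(1-a)) / a ≤ t * Real.log t := by
      rw [div_le_iff₀ ha]; nlinarith
    linarith
  · have hdiv : t - 1 ≤ (a*t+(1-a)) * Real.log (a*t+(1-a)) / a := by
      rw [le_div_iff₀ ha]; nlinarith
    linarith

lemma tendsto_psi (t : ℝ) :
    Tendsto (fun a : ℝ => t * Real.log t - ((a * t + (1 - a)) * Real.log (a * t + (1 - a))) / a)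
      (𝓝[>] (0:ℝ)) (𝓝 (t * Real.log t - (t - 1))) := by
  have hinner : HasDerivAt (fun a : ℝ => 1 + a * (t - 1)) (t - 1) 0 := by
    simpa using ((hasDerivAt_id (0:ℝ)).mul_const (t - 1)).const_add 1
  have houter : HasDerivAt (fun x : ℝ => x * Real.log x) (Real.log (1 + 0 * (t-1)) + 1)
      (1 + 0 * (t-1)) := Real.hasDerivAt_mul_log (by norm_num)
  have hcomp := houter.comp 0 hinner
  have hderiv : HasDerivAt (fun a : ℝ => (1 + a * (t - 1)) * Real.log (1 + a * (t - 1)))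
      (t - 1) 0 := by
    have := hcomp.congr_deriv (show (Real.log (1 + 0 * (t-1)) + 1) * (t - 1) = t - 1 by simp)
    exact this
  have hslope := hasDerivAt_iff_tendsto_slope.mp hderiv
  have h2 : Tendsto (fun a : ℝ => ((a * t + (1 - a)) * Real.log (a * t + (1 - a))) / a)
      (𝓝[>] (0:ℝ)) (𝓝 (t - 1)) := by
    refine Tendsto.congr' ?_ (hslope.mono_left (nhdsWithin_mono 0 fun x hx => ne_of_gt hx))
    filter_upwards [self_mem_nhdsWithin] with a ha
    have : (1 : ℝ) + a * (t - 1) = a * t + (1 - a) := by ring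
    simp [slope_def_field, this]
  exact tendsto_const_nhds.sub h2

variable {β : Type*} [MeasurableSpace β]


lemma gibbs_aux (μ ν : Measure β) [IsProbabilityMeasure μ] [IsFiniteMeasure ν]
    (hμν : μ ≪ ν) (hν : ν Set.univ ≤ 1)
    (hint : Integrable (fun x => Real.log (μ.rnDeriv ν x).toReal) μ) :
    0 ≤ ∫ x, Real.log (μ.rnDeriv ν x).toReal ∂μ := by
  set r : β → ℝ := fun x => (μ.rnDeriv ν x).toReal with hr_def
  have hr_meas : Measurable r := (Measure.measurable_rnDeriv μ ν).ennreal_toReal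
  have hr_pos : ∀ᵐ x ∂μ, 0 < r x := by
    filter_upwards [Measure.rnDeriv_pos hμν, hμν.ae_le (Measure.rnDeriv_lt_top μ ν)] with x h1 h2
    exact ENNReal.toReal_pos h1.ne' h2.ne
  have hb : ∀ x, ‖r x • (r x)⁻¹‖ ≤ 1 := by
    intro x
    rw [smul_eq_mul, Real.norm_eq_abs,
      abs_of_nonneg (mul_nonneg ENNReal.toReal_nonneg (inv_nonneg.2 ENNReal.toReal_nonneg))]
    exact mul_inv_le_one
  have hint_inv : Integrable (fun x => (r x)⁻¹) μ := by
    rw [← MeasureTheory.integrable_rnDeriv_smul_iff hμν]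
    exact (integrable_const (1:ℝ)).mono'
      ((hr_meas.mul hr_meas.inv).aestronglyMeasurable) (ae_of_all _ hb)
  have hle : ∫ x, (r x)⁻¹ ∂μ ≤ 1 := by
    rw [← MeasureTheory.integral_rnDeriv_smul hμν]
    have h1 : ∫ x, r x • (r x)⁻¹ ∂ν ≤ ∫ _x, (1:ℝ) ∂ν := by
      refine integral_mono ?_ (integrable_const 1) ?_
      · exact (integrable_const (1:ℝ)).mono'
          ((hr_meas.mul hr_meas.inv).aestronglyMeasurable) (ae_of_all _ hb)
      · intro x
        have h0 : (0:ℝ) ≤ r x * (r x)⁻¹ :=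
          mul_nonneg ENNReal.toReal_nonneg (inv_nonneg.2 ENNReal.toReal_nonneg)
        have := hb x
        rw [Real.norm_eq_abs, smul_eq_mul, abs_of_nonneg h0] at this
        exact this
    have h2 : ∫ _x, (1:ℝ) ∂ν ≤ 1 := by
      rw [integral_const, smul_eq_mul, mul_one]
      calc (ν Set.univ).toReal ≤ (1 : ℝ≥0∞).toReal := ENNReal.toReal_mono ENNReal.one_ne_top hν
      _ = 1 := by simp
    linarith
  have key : ∀ᵐ x ∂μ, -Real.log (r x) ≤ (r x)⁻¹ - 1 := by
    filter_upwards [hr_pos] with x hx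
    have := Real.log_le_sub_one_of_pos (inv_pos.2 hx)
    rwa [Real.log_inv] at this
  have h2 : ∫ x, -Real.log (r x) ∂μ ≤ ∫ x, ((r x)⁻¹ - 1) ∂μ :=
    integral_mono_ae hint.neg (hint_inv.sub (integrable_const 1)) key
  rw [integral_neg, integral_sub hint_inv (integrable_const 1), integral_const] at h2
  have h3 : μ.real Set.univ = 1 := by simp
  rw [h3] at h2
  simp only [smul_eq_mul, one_mul] at h2
  linarith

lemma jsDiv_eq (P Q : Measure β) [IsProbabilityMeasure P] [IsProbabilityMeasure Q]
    (hPQ : P ≪ Q) (hint : Integrable (fun x => Real.log (P.rnDeriv Q x).toReal) P)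
    {a : ℝ} (ha : 0 < a) (ha1 : a < 1) :
    jsDiv a P Q = ∫ x, (a * ((P.rnDeriv Q x).toReal * Real.log (P.rnDeriv Q x).toReal)
      - (a * (P.rnDeriv Q x).toReal + (1 - a)) * Real.log (a * (P.rnDeriv Q x).toReal + (1 - a)))
      ∂Q := by
  have h1a : (0:ℝ) < 1 - a := by linarith
  set r : β → ℝ := fun x => (P.rnDeriv Q x).toReal with hr_def
  set g : β → ℝ := fun x => a * r x + (1 - a) with hg_def
  set gE : β → ℝ≥0∞ := fun x => ENNReal.ofReal a * P.rnDeriv Q x + ENNReal.ofReal (1 - a)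
    with hgE_def
  set M : Measure β := ENNReal.ofReal a • P + ENNReal.ofReal (1 - a) • Q with hM_def
  have hr_meas : Measurable r := (Measure.measurable_rnDeriv P Q).ennreal_toReal
  have hg_pos : ∀ x, 0 < g x := by
    intro x
    have : 0 ≤ r x := ENNReal.toReal_nonneg
    simp only [hg_def]; nlinarith
  have hgE_meas : Measurable gE := ((Measure.measurable_rnDeriv P Q).const_mul _).add
    measurable_const
  have hgE_ne_zero : ∀ x, gE x ≠ 0 := by
    intro x h
    rw [hgE_def] at h
    simp only [add_eq_zero] at h
    exact (ENNReal.ofReal_pos.mpr h1a).ne' h.2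
  have hgE_ne_top : ∀ᵐ x ∂Q, gE x ≠ ∞ := by
    filter_upwards [Measure.rnDeriv_lt_top P Q] with x hx
    exact ENNReal.add_ne_top.mpr
      ⟨ENNReal.mul_ne_top ENNReal.ofReal_ne_top hx.ne, ENNReal.ofReal_ne_top⟩
  have hgE_toReal : ∀ᵐ x ∂Q, (gE x).toReal = g x := by
    filter_upwards [Measure.rnDeriv_lt_top P Q] with x hx
    rw [hgE_def]
    simp only
    rw [ENNReal.toReal_add (ENNReal.mul_ne_top ENNReal.ofReal_ne_top hx.ne) ENNReal.ofReal_ne_top,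
      ENNReal.toReal_mul, ENNReal.toReal_ofReal ha.le, ENNReal.toReal_ofReal h1a.le]
  have hM : M = Q.withDensity gE := by
    have hsum : Q.withDensity ((fun x => ENNReal.ofReal a * P.rnDeriv Q x)
        + fun _ => ENNReal.ofReal (1 - a)) = ENNReal.ofReal a • P + ENNReal.ofReal (1 - a) • Q := by
      rw [withDensity_add_right _ measurable_const, withDensity_const]
      congr 1
      conv_rhs => rw [← Measure.withDensity_rnDeriv_eq P Q hPQ,
        ← withDensity_smul _ (Measure.measurable_rnDeriv P Q)]
      rfl
    rw [hM_def, ← hsum]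
    rfl
  haveI hMprob : IsProbabilityMeasure M := by
    constructor
    have h1 : ENNReal.ofReal a + ENNReal.ofReal (1 - a) = 1 := by
      rw [← ENNReal.ofReal_add ha.le h1a.le]; norm_num
    rw [hM_def]
    simp [measure_univ, h1]
  have hQM_ac : Q ≪ M := by
    rw [hM]
    exact withDensity_absolutelyContinuous' hgE_meas.aemeasurable (ae_of_all _ hgE_ne_zero)
  have hPM_ac : P ≪ M := hPQ.trans hQM_ac
  have hQM : ∀ᵐ x ∂Q, Q.rnDeriv M x = (gE x)⁻¹ := by
    rw [hM]
    filter_upwards [Measure.rnDeriv_withDensity_right Q Q hgE_meas.aemeasurable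
      (ae_of_all _ hgE_ne_zero) hgE_ne_top, Measure.rnDeriv_self Q] with x h1 h2
    rw [h1, h2, mul_one]
  have hPM : ∀ᵐ x ∂Q, P.rnDeriv M x = (gE x)⁻¹ * P.rnDeriv Q x := by
    rw [hM]
    exact Measure.rnDeriv_withDensity_right P Q hgE_meas.aemeasurable
      (ae_of_all _ hgE_ne_zero) hgE_ne_top
  have hQM_t : ∀ᵐ x ∂Q, Real.log (Q.rnDeriv M x).toReal = -Real.log (g x) := by
    filter_upwards [hQM, hgE_toReal] with x h1 h2
    rw [h1, ENNReal.toReal_inv, h2, Real.log_inv]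
  have hPM_t : ∀ᵐ x ∂P, Real.log (P.rnDeriv M x).toReal = Real.log (r x) - Real.log (g x) := by
    filter_upwards [hPQ.ae_le hPM, hPQ.ae_le hgE_toReal, Measure.rnDeriv_pos hPQ,
      hPQ.ae_le (Measure.rnDeriv_lt_top P Q)] with x h1 h2 h3 h4
    have hr_pos : 0 < r x := ENNReal.toReal_pos h3.ne' h4.ne
    rw [h1, ENNReal.toReal_mul, ENNReal.toReal_inv, h2,
      Real.log_mul (inv_ne_zero (hg_pos x).ne') hr_pos.ne', Real.log_inv]
    ring
  have hg_meas : Measurable (fun x => Real.log (g x)) :=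
    Real.measurable_log.comp ((hr_meas.const_mul a).add_const (1 - a))
  have hlogg_Q : Integrable (fun x => Real.log (g x)) Q := by
    refine ((integrable_const (|Real.log (1 - a)| + 1)).add
      ((Measure.integrable_toReal_rnDeriv (μ := P) (ν := Q)).const_mul a)).mono'
      hg_meas.aestronglyMeasurable (ae_of_all _ fun x => ?_)
    have := abs_log_affine_le' ha ha1 (ENNReal.toReal_nonneg (a := P.rnDeriv Q x))
    rw [Real.norm_eq_abs]
    simp only [hg_def]
    calc |Real.log (a * r x + (1 - a))| ≤ |Real.log (1 - a)| + (a * r x + 1) := this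
    _ = |Real.log (1 - a)| + 1 + a * r x := by ring
  have hlogg_P : Integrable (fun x => Real.log (g x)) P := by
    refine ((integrable_const (|Real.log (1 - a)| + Real.log 2)).add hint.abs).mono'
      hg_meas.aestronglyMeasurable (ae_of_all _ fun x => ?_)
    have := abs_log_affine_le ha ha1 (ENNReal.toReal_nonneg (a := P.rnDeriv Q x))
    rw [Real.norm_eq_abs]
    exact this
  have hI1_int : Integrable (fun x => Real.log (P.rnDeriv M x).toReal) P :=
    (hint.sub hlogg_P).congr (by filter_upwards [hPM_t] with x hx; exact hx.symm)
  have hI2_int : Integrable (fun x => Real.log (Q.rnDeriv M x).toReal) Q :=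
    hlogg_Q.neg.congr (by filter_upwards [hQM_t] with x hx; exact hx.symm)
  have hkl1 : klDiv P M = ENNReal.ofReal (∫ x, Real.log (P.rnDeriv M x).toReal ∂P) := by
    rw [klDiv, if_pos ⟨hPM_ac, hI1_int⟩]
  have hkl2 : klDiv Q M = ENNReal.ofReal (∫ x, Real.log (Q.rnDeriv M x).toReal ∂Q) := by
    rw [klDiv, if_pos ⟨hQM_ac, hI2_int⟩]
  have hI1_nonneg := gibbs_aux P M hPM_ac (le_of_eq measure_univ) hI1_int
  have hI2_nonneg := gibbs_aux Q M hQM_ac (le_of_eq measure_univ) hI2_int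
  have hjs : jsDiv a P Q = a * ∫ x, Real.log (P.rnDeriv M x).toReal ∂P
      + (1 - a) * ∫ x, Real.log (Q.rnDeriv M x).toReal ∂Q := by
    rw [jsDiv, ← hM_def, hkl1, hkl2, ENNReal.toReal_ofReal hI1_nonneg,
      ENNReal.toReal_ofReal hI2_nonneg]
  rw [hjs, integral_congr_ae hPM_t, integral_congr_ae hQM_t]
  have hP_to_Q : ∫ x, (Real.log (r x) - Real.log (g x)) ∂P
      = ∫ x, r x • (Real.log (r x) - Real.log (g x)) ∂Q :=
    (MeasureTheory.integral_rnDeriv_smul hPQ).symm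
  have hA_int : Integrable (fun x => r x • (Real.log (r x) - Real.log (g x))) Q :=
    (MeasureTheory.integrable_rnDeriv_smul_iff hPQ).mpr (hint.sub hlogg_P)
  rw [hP_to_Q]
  calc a * ∫ x, r x • (Real.log (r x) - Real.log (g x)) ∂Q
      + (1 - a) * ∫ x, -Real.log (g x) ∂Q
      = ∫ x, a • (r x • (Real.log (r x) - Real.log (g x))) ∂Q
        + ∫ x, (1 - a) • (-Real.log (g x)) ∂Q := by
        rw [integral_smul, integral_smul, smul_eq_mul, smul_eq_mul]
    _ = ∫ x, (a • (r x • (Real.log (r x) - Real.log (g x))) + (1 - a) • (-Real.log (g x))) ∂Q :=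
        (integral_add (hA_int.smul a) (hlogg_Q.neg.smul (1 - a))).symm
    _ = ∫ x, (a * (r x * Real.log (r x)) - g x * Real.log (g x)) ∂Q := by
        refine integral_congr_ae (ae_of_all _ fun x => ?_)
        simp only [smul_eq_mul, hg_def]
        ring

lemma tendsto_main (P Q : Measure β) [IsProbabilityMeasure P] [IsProbabilityMeasure Q]
    (h : klDiv P Q ≠ ⊤) :
    Tendsto (fun a : ℝ => jsDiv a P Q / (a * (1 - a))) (𝓝[>] 0) (𝓝 (klDiv P Q).toReal) := by
  have hc : P ≪ Q ∧ Integrable (fun x => Real.log (P.rnDeriv Q x).toReal) P := by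
    by_contra hc
    rw [klDiv, if_neg hc] at h
    exact h rfl
  obtain ⟨hPQ, hint⟩ := hc
  set r : β → ℝ := fun x => (P.rnDeriv Q x).toReal with hr_def
  have hr_meas : Measurable r := (Measure.measurable_rnDeriv P Q).ennreal_toReal
  have hr_int : Integrable r Q := Measure.integrable_toReal_rnDeriv
  have hφ_int : Integrable (fun x => r x * Real.log (r x)) Q := by
    have := (MeasureTheory.integrable_rnDeriv_smul_iff hPQ
      (f := fun x => Real.log (r x))).mpr hint
    simpa [smul_eq_mul] using this
  have hK : (klDiv P Q).toReal = ∫ x, Real.log (r x) ∂P := by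
    rw [klDiv, if_pos ⟨hPQ, hint⟩,
      ENNReal.toReal_ofReal (gibbs_aux P Q hPQ (le_of_eq measure_univ) hint)]
  have hKQ : ∫ x, Real.log (r x) ∂P = ∫ x, r x * Real.log (r x) ∂Q := by
    rw [← MeasureTheory.integral_rnDeriv_smul hPQ (f := fun x => Real.log (r x))]
    simp [smul_eq_mul]
    rfl
  have hL_int : Integrable (fun x => r x * Real.log (r x) - (r x - 1)) Q :=
    hφ_int.sub (hr_int.sub (integrable_const 1))
  have hsub_int : Integrable (fun x => r x - 1) Q := hr_int.sub (integrable_const 1)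
  have h_int_L : ∫ x, (r x * Real.log (r x) - (r x - 1)) ∂Q = (klDiv P Q).toReal := by
    rw [hK, hKQ, integral_sub hφ_int hsub_int, integral_sub hr_int (integrable_const 1)]
    have h1 : ∫ x, r x ∂Q = 1 := by
      rw [hr_def, Measure.integral_toReal_rnDeriv hPQ]
      simp
    rw [h1]
    simp
  have hIoo : Set.Ioo (0:ℝ) 1 ∈ 𝓝[>] (0:ℝ) := Ioo_mem_nhdsGT_of_mem ⟨le_refl _, one_pos⟩
  have hDCT : Tendsto
      (fun a : ℝ => ∫ x, (r x * Real.log (r x)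
        - ((a * r x + (1 - a)) * Real.log (a * r x + (1 - a))) / a) ∂Q)
      (𝓝[>] (0:ℝ)) (𝓝 (∫ x, (r x * Real.log (r x) - (r x - 1)) ∂Q)) := by
    refine tendsto_integral_filter_of_dominated_convergence
      (fun x => r x * Real.log (r x) - (r x - 1)) ?_ ?_ hL_int ?_
    · refine Eventually.of_forall fun a => ?_
      have hm1 : Measurable fun x => r x * Real.log (r x) :=
        hr_meas.mul (Real.measurable_log.comp hr_meas)
      have hm2 : Measurable fun x => a * r x + (1 - a) := (hr_meas.const_mul a).add_const (1 - a)
      exact (hm1.sub ((hm2.mul (Real.measurable_log.comp hm2)).div_const a)).aestronglyMeasurable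
    · filter_upwards [hIoo] with a ha
      refine ae_of_all _ fun x => ?_
      have := psi_bounds ha.1 ha.2 (ENNReal.toReal_nonneg (a := P.rnDeriv Q x))
      simpa [Real.norm_eq_abs] using this
    · exact ae_of_all _ fun x => tendsto_psi (r x)
  have h_eq : ∀ᶠ a in 𝓝[>] (0:ℝ), jsDiv a P Q / (a * (1 - a))
      = (∫ x, (r x * Real.log (r x)
        - ((a * r x + (1 - a)) * Real.log (a * r x + (1 - a))) / a) ∂Q) * (1 - a)⁻¹ := by
    filter_upwards [hIoo] with a ha
    rw [jsDiv_eq P Q hPQ hint ha.1 ha.2]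
    have ha0 : a ≠ 0 := ha.1.ne'
    have h1a : (1:ℝ) - a ≠ 0 := (by linarith [ha.2] : (0:ℝ) < 1 - a).ne'
    have hpull : ∫ x, (a * (r x * Real.log (r x))
        - (a * r x + (1 - a)) * Real.log (a * r x + (1 - a))) ∂Q
        = a * ∫ x, (r x * Real.log (r x)
          - ((a * r x + (1 - a)) * Real.log (a * r x + (1 - a))) / a) ∂Q := by
      rw [← smul_eq_mul, ← integral_smul]
      refine integral_congr_ae (ae_of_all _ fun x => ?_)
      simp only [smul_eq_mul]
      field_simp
    rw [hpull]
    field_simp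
  refine Tendsto.congr' (h_eq.mono fun a ha => ha.symm) ?_
  have hinv : Tendsto (fun a : ℝ => (1 - a)⁻¹) (𝓝[>] (0:ℝ)) (𝓝 1) := by
    have h1 : Tendsto (fun a : ℝ => 1 - a) (𝓝 (0:ℝ)) (𝓝 1) := by
      have h2 : Tendsto (fun a : ℝ => 1 - a) (𝓝 (0:ℝ)) (𝓝 (1 - 0)) :=
        Filter.Tendsto.sub tendsto_const_nhds tendsto_id
      rwa [sub_zero] at h2
    have := (h1.inv₀ (by norm_num)).mono_left (nhdsWithin_le_nhds (s := Set.Ioi (0:ℝ)))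
    simpa using this
  have := hDCT.mul hinv
  rw [mul_one, h_int_L] at this
  exact this


end JSAux

/-- Limits of the normalized α-Jensen–Shannon divergence:
if `D_KL(P‖Q) < ∞` then `JS_α(P‖Q)/(α(1-α)) → D_KL(P‖Q)` as `α → 0⁺`, and
if `D_KL(Q‖P) < ∞` then `JS_α(P‖Q)/(α(1-α)) → D_KL(Q‖P)` as `α → 1⁻`. -/
theorem jsDiv_normalized_limits
    {β : Type*} [MeasurableSpace β] (P Q : Measure β)
    [IsProbabilityMeasure P] [IsProbabilityMeasure Q] :
    (klDiv P Q ≠ ⊤ →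
      Tendsto (fun a : ℝ => jsDiv a P Q / (a * (1 - a))) (𝓝[>] 0)
        (𝓝 (klDiv P Q).toReal))
    ∧ (klDiv Q P ≠ ⊤ →
      Tendsto (fun a : ℝ => jsDiv a P Q / (a * (1 - a))) (𝓝[<] 1)
        (𝓝 (klDiv Q P).toReal)) := by
  constructor
  · exact tendsto_main P Q
  · intro h
    have hmain := tendsto_main Q P h
    have hmap : Tendsto (fun a : ℝ => 1 - a) (𝓝[<] (1:ℝ)) (𝓝[>] (0:ℝ)) := by
      apply tendsto_nhdsWithin_of_tendsto_nhds_of_eventually_within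
      · have h1 : Tendsto (fun a : ℝ => 1 - a) (𝓝 (1:ℝ)) (𝓝 (1 - 1)) :=
          Filter.Tendsto.sub tendsto_const_nhds tendsto_id
        rw [sub_self] at h1
        exact h1.mono_left nhdsWithin_le_nhds
      · filter_upwards [self_mem_nhdsWithin] with a ha
        exact Set.mem_Ioi.mpr (sub_pos.mpr (Set.mem_Iio.mp ha))
    have := hmain.comp hmap
    refine this.congr fun a => ?_
    have h1 : (1 : ℝ) - (1 - a) = a := by ring
    simp only [Function.comp_apply]
    rw [show jsDiv (1 - a) Q P = jsDiv a P Q by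
      rw [jsDiv, jsDiv, h1, add_comm (ENNReal.ofReal (1 - a) • Q)]
      ring, h1, mul_comm]
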